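/- arXiv:2512.21972 — 9 statements merged into one kernel-verified Lean document; each statement's English description precedes it below -/
import Mathlib

section
/- Let λ > 1, r > 0, η ∈ (1/λ, 1], η̄ ∈ (1/λ, 1] with η̄ ≥ η. Then the function ξ(τ) = (r(ηλ - 1) + τ·r·ηλ·(η̄λ - 1)) / (1 + r·ηλ + τ(1 + r·η̄·η·λ²)) is strictly increasing in τ on [0, ∞). -/
theorem stmt_2 (lam r η ηb : ℝ) (hlam : 1 < lam) (hr : 0 < r)
    (hη : η ∈ Set.Ioc (1 / lam) 1) (hηb : ηb ∈ Set.Ioc (1 / lam) 1) (hle : η ≤ ηb) :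
    StrictMonoOn
      (fun τ : ℝ =>
        (r * (η * lam - 1) + τ * (r * (η * lam) * (ηb * lam - 1))) /
          (1 + r * (η * lam) + τ * (1 + r * ηb * η * lam ^ 2)))
      (Set.Ici (0 : ℝ)) := by
  obtain ⟨hη1, hη2⟩ := hη
  obtain ⟨hηb1, hηb2⟩ := hηb
  have hlam0 : (0:ℝ) < lam := by linarith
  rw [div_lt_iff₀ hlam0] at hη1 hηb1
  have h1 : 1 < η * lam := by nlinarith
  have h2 : 1 < ηb * lam := by nlinarith
  have hη0 : 0 < η := by nlinarith
  have hηb0 : 0 < ηb := by nlinarith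
  have key : 0 < (r * (η * lam) * (ηb * lam - 1)) * (1 + r * (η * lam)) -
      (r * (η * lam - 1)) * (1 + r * ηb * η * lam ^ 2) := by
    have hA : 0 < η * ηb * lam ^ 2 - 2 * (η * lam) + 1 := by
      nlinarith [mul_pos (sub_pos.mpr h1) (sub_pos.mpr h2),
        mul_nonneg (sub_nonneg.mpr hle) hlam0.le]
    have hB : 0 ≤ r ^ 2 * η * lam ^ 2 * (ηb - η) := mul_nonneg (by positivity) (sub_nonneg.mpr hle)
    nlinarith [mul_pos hr hA]
  intro x hx y hy hxy
  simp only [Set.mem_Ici] at hx hy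
  have hd : 0 < 1 + r * ηb * η * lam ^ 2 := by positivity
  have hdx : 0 < 1 + r * (η * lam) + x * (1 + r * ηb * η * lam ^ 2) := by nlinarith
  have hdy : 0 < 1 + r * (η * lam) + y * (1 + r * ηb * η * lam ^ 2) := by nlinarith
  simp only
  rw [div_lt_div_iff₀ hdx hdy]
  nlinarith [mul_pos (sub_pos.mpr hxy) key]
end

section
/- Let λ > 1, r > 0, η ∈ (1/λ, 1], η̄ ∈ (1/λ, 1] with η̄ ≥ η. Then for all τ ≥ 0, ξ(τ) = (r(ηλ - 1) + τ·r·ηλ·(η̄λ - 1)) / (1 + r·ηλ + τ(1 + r·η̄·η·λ²)) satisfies 0 < ξ(τ) < 1 - 1/λ. -/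
theorem stmt_3 (lam r η ηb : ℝ) (hlam : 1 < lam) (hr : 0 < r)
    (hη : η ∈ Set.Ioc (1 / lam) 1) (hηb : ηb ∈ Set.Ioc (1 / lam) 1) (hle : η ≤ ηb) :
    ∀ τ : ℝ, 0 ≤ τ →
      0 < (r * (η * lam - 1) + τ * (r * (η * lam) * (ηb * lam - 1))) /
            (1 + r * (η * lam) + τ * (1 + r * ηb * η * lam ^ 2)) ∧
      (r * (η * lam - 1) + τ * (r * (η * lam) * (ηb * lam - 1))) /
          (1 + r * (η * lam) + τ * (1 + r * ηb * η * lam ^ 2)) < 1 - 1 / lam := by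
  intro τ hτ
  have hL : 0 < lam := by linarith
  have hel : 1 < η * lam := by
    have := (div_lt_iff₀ hL).mp hη.1
    linarith
  have hebl : 1 < ηb * lam := by
    have := (div_lt_iff₀ hL).mp hηb.1
    linarith
  have hη0 : 0 < η := lt_trans (by positivity) hη.1
  have hηb0 : 0 < ηb := lt_trans (by positivity) hηb.1
  have hD : 0 < 1 + r * (η * lam) + τ * (1 + r * ηb * η * lam ^ 2) := by positivity
  constructor
  · apply div_pos _ hD
    nlinarith [mul_nonneg hτ (mul_nonneg (mul_nonneg hr.le
      (mul_pos hη0 hL).le) (by linarith : (0:ℝ) ≤ ηb * lam - 1))]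
  · rw [div_lt_iff₀ hD]
    have key : (r * (η * lam - 1) + τ * (r * (η * lam) * (ηb * lam - 1))) * lam <
        (lam - 1) * (1 + r * (η * lam) + τ * (1 + r * ηb * η * lam ^ 2)) := by
      have h1 : (0:ℝ) ≤ r * lam * (1 - η) := by
        have := hη.2
        have : (0:ℝ) ≤ 1 - η := by linarith
        positivity
      have h2 : (0:ℝ) ≤ τ * (r * η * lam ^ 2 * (1 - ηb)) := by
        have := hηb.2
        have : (0:ℝ) ≤ 1 - ηb := by linarith
        positivity
      nlinarith
    have hiff : 1 - 1 / lam = (lam - 1) / lam := by field_simp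
    rw [hiff, div_mul_eq_mul_div, lt_div_iff₀ hL]
    nlinarith [key]
end

section
/- Let λ > 1, r > 0, η ∈ (1/λ, 1], η̄ ∈ (1/λ, 1] with η̄ ≥ η. Then the limit as τ → ∞ of ξ(τ) = (r(ηλ - 1) + τ·r·ηλ·(η̄λ - 1)) / (1 + r·ηλ + τ(1 + r·η̄·η·λ²)) equals r·ηλ·(η̄λ - 1)/(1 + r·η̄·η·λ²), and this limit is strictly less than 1 - 1/(η̄λ). -/
theorem stmt_4 (lam r η ηb : ℝ) (hlam : 1 < lam) (hr : 0 < r)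
    (hη : η ∈ Set.Ioc (1 / lam) 1) (hηb : ηb ∈ Set.Ioc (1 / lam) 1) (hle : η ≤ ηb) :
    Filter.Tendsto
      (fun τ : ℝ =>
        (r * (η * lam - 1) + τ * (r * (η * lam) * (ηb * lam - 1))) /
          (1 + r * (η * lam) + τ * (1 + r * ηb * η * lam ^ 2)))
      Filter.atTop
      (nhds (r * (η * lam) * (ηb * lam - 1) / (1 + r * ηb * η * lam ^ 2))) ∧
    r * (η * lam) * (ηb * lam - 1) / (1 + r * ηb * η * lam ^ 2) < 1 - 1 / (ηb * lam) := by
  have hlam0 : (0:ℝ) < lam := lt_trans one_pos hlam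
  have hη1 : 1 < η * lam := by
    have := hη.1
    rw [div_lt_iff₀ hlam0] at this
    linarith
  have hηb1 : 1 < ηb * lam := by
    have := hηb.1
    rw [div_lt_iff₀ hlam0] at this
    linarith
  have hη0 : 0 < η := by nlinarith
  have hηb0 : 0 < ηb := by nlinarith
  have hd : 0 < 1 + r * ηb * η * lam ^ 2 := by positivity
  constructor
  · set a := r * (η * lam - 1)
    set b := r * (η * lam) * (ηb * lam - 1)
    set c := 1 + r * (η * lam)
    set d := 1 + r * ηb * η * lam ^ 2
    have h1 : Filter.Tendsto (fun τ : ℝ => (a / τ + b) / (c / τ + d))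
        Filter.atTop (nhds (b / d)) := by
      have hnum : Filter.Tendsto (fun τ : ℝ => a / τ + b) Filter.atTop (nhds (0 + b)) :=
        (tendsto_const_nhds.div_atTop Filter.tendsto_id).add tendsto_const_nhds
      have hden : Filter.Tendsto (fun τ : ℝ => c / τ + d) Filter.atTop (nhds (0 + d)) :=
        (tendsto_const_nhds.div_atTop Filter.tendsto_id).add tendsto_const_nhds
      rw [zero_add] at hnum hden
      exact hnum.div hden (ne_of_gt hd)
    refine h1.congr' ?_
    filter_upwards [Filter.eventually_gt_atTop 0] with τ hτ
    field_simp
  · rw [div_lt_iff₀ hd]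
    have h1 : 1 - 1 / (ηb * lam) = (ηb * lam - 1) / (ηb * lam) := by
      field_simp
    rw [h1, div_mul_eq_mul_div, lt_div_iff₀ (lt_trans one_pos hηb1)]
    nlinarith [hd, hηb1, mul_pos hr (mul_pos hη0 hlam0)]
end

section
/- For every integer d ≥ 2, every complex root q of the polynomial q^d − q^{d−1} + 2 = 0 satisfies |q| > 1, except that when d is odd, q = −1 is a root with |q| = 1; moreover −1 is a root if and only if d is odd, and no root lies on the unit circle other than possibly −1. -/
/-! Writing the equation as `q ^ (d - 1) * (q - 1) = -2` gives `‖q‖ ^ (d - 1) * ‖q - 1‖ = 2`.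
If `‖q‖ ≤ 1`, then `‖q - 1‖ ≥ 2`, whereas `‖q - 1‖ ≤ ‖q‖ + 1 ≤ 2`; equality in the triangle
inequality on the closed unit disc forces `q = -1`. -/

namespace Complex

theorem eq_neg_one_of_norm_le_one_of_two_le_norm_sub_one {z : ℂ} (hz : ‖z‖ ≤ 1)
    (h : 2 ≤ ‖z - 1‖) : z = -1 := by
  have hz_sq : z.re * z.re + z.im * z.im ≤ 1 := by
    rw [← normSq_apply, normSq_eq_norm_sq]; nlinarith [norm_nonneg z]
  have hsub_sq : 4 ≤ (z.re - 1) * (z.re - 1) + z.im * z.im := by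
    have := normSq_apply (z - 1)
    simp only [sub_re, one_re, sub_im, one_im, sub_zero] at this
    rw [← this, normSq_eq_norm_sq]; nlinarith
  have hre : z.re = -1 := by nlinarith [mul_self_nonneg z.im]
  have him : z.im = 0 := by nlinarith [mul_self_nonneg z.im]
  exact ext (by simp [hre]) (by simp [him])

theorem pow_pred_mul_sub_one_eq_neg_two {d : ℕ} {q : ℂ} (hq : q ^ d - q ^ (d - 1) + 2 = 0) :
    q ^ (d - 1) * (q - 1) = -2 := by
  obtain _ | n := d
  · norm_num at hq
  · simp only [Nat.add_sub_cancel] at hq ⊢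
    linear_combination hq

theorem eq_neg_one_of_pow_sub_pow_pred_add_two_eq_zero {d : ℕ} {q : ℂ}
    (hq : q ^ d - q ^ (d - 1) + 2 = 0) (hle : ‖q‖ ≤ 1) : q = -1 := by
  have hnorm : ‖q‖ ^ (d - 1) * ‖q - 1‖ = 2 := by
    simpa using congrArg norm (pow_pred_mul_sub_one_eq_neg_two hq)
  have hpow : ‖q‖ ^ (d - 1) ≤ 1 := pow_le_one₀ (norm_nonneg q) hle
  refine eq_neg_one_of_norm_le_one_of_two_le_norm_sub_one hle ?_
  calc (2 : ℝ) = ‖q‖ ^ (d - 1) * ‖q - 1‖ := hnorm.symm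
    _ ≤ 1 * ‖q - 1‖ := by gcongr
    _ = ‖q - 1‖ := one_mul _

theorem neg_one_pow_sub_neg_one_pow_pred_add_two_eq_zero_iff (d : ℕ) :
    (-1 : ℂ) ^ d - (-1 : ℂ) ^ (d - 1) + 2 = 0 ↔ Odd d := by
  obtain _ | n := d
  · norm_num
  · have hne : (-1 : ℂ) ≠ 1 := by norm_num
    rw [Nat.add_sub_cancel, Nat.odd_add_one, Nat.not_odd_iff_even,
      ← neg_one_pow_eq_one_iff_even hne, pow_succ]
    constructor
    · intro h; linear_combination (-1 / 2 : ℂ) * h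
    · intro h; linear_combination (-2 : ℂ) * h

end Complex

open Complex in
theorem stmt_11_general (d : ℕ) :
    (∀ q : ℂ, q ^ d - q ^ (d - 1) + 2 = 0 → 1 < ‖q‖ ∨ (q = -1 ∧ Odd d)) ∧
    ((-1 : ℂ) ^ d - (-1 : ℂ) ^ (d - 1) + 2 = 0 ↔ Odd d) ∧
    (∀ q : ℂ, q ^ d - q ^ (d - 1) + 2 = 0 → ‖q‖ = 1 → q = -1) := by
  refine ⟨fun q hq => ?_, neg_one_pow_sub_neg_one_pow_pred_add_two_eq_zero_iff d,
    fun q hq hnorm => eq_neg_one_of_pow_sub_pow_pred_add_two_eq_zero hq hnorm.le⟩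
  rcases lt_or_ge 1 ‖q‖ with hgt | hle
  · exact Or.inl hgt
  · obtain rfl := eq_neg_one_of_pow_sub_pow_pred_add_two_eq_zero hq hle
    exact Or.inr ⟨rfl, (neg_one_pow_sub_neg_one_pow_pred_add_two_eq_zero_iff d).mp hq⟩

theorem stmt_11 (d : ℕ) (hd : 2 ≤ d) :
    (∀ q : ℂ, q ^ d - q ^ (d - 1) + 2 = 0 → 1 < ‖q‖ ∨ (q = -1 ∧ Odd d)) ∧
    ((-1 : ℂ) ^ d - (-1 : ℂ) ^ (d - 1) + 2 = 0 ↔ Odd d) ∧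
    (∀ q : ℂ, q ^ d - q ^ (d - 1) + 2 = 0 → ‖q‖ = 1 → q = -1) :=
  stmt_11_general d
end

section
/- For every integer d ≥ 2, the polynomial q^d − q^{d−1} + 2 has at least one non-real complex root. -/
open Polynomial

lemma aux_nonneg (d : ℕ) (hd : 2 ≤ d) (x : ℝ) (hx : 0 ≤ x) :
    x ^ d - x ^ (d - 1) + 2 ≠ 0 := by
  have hdd : x ^ d = x ^ (d - 1) * x := by
    rw [← pow_succ]; congr 1; omega
  rcases le_or_gt x 1 with h1 | h1
  · have h2 : x ^ (d - 1) ≤ 1 := pow_le_one₀ hx h1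
    have h3 : 0 ≤ x ^ d := pow_nonneg hx d
    nlinarith
  · have h2 : 0 < x ^ (d - 1) := pow_pos (by linarith) _
    nlinarith

lemma aux_even (d : ℕ) (hd : 2 ≤ d) (hde : Even d) (x : ℝ) (hx : x ≤ 0) :
    x ^ d - x ^ (d - 1) + 2 ≠ 0 := by
  have h1 : 0 ≤ x ^ d := hde.pow_nonneg x
  have hodd : Odd (d - 1) := by
    rcases hde with ⟨k, hk⟩
    exact ⟨k - 1, by omega⟩
  have h2 : x ^ (d - 1) ≤ 0 := hodd.pow_nonpos hx
  nlinarith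

lemma aux_odd (d : ℕ) (hd : 2 ≤ d) (hdo : Odd d) (x : ℝ)
    (hx : x ^ d - x ^ (d - 1) + 2 = 0) : x = -1 := by
  have hxneg : x < 0 := by
    by_contra h
    exact aux_nonneg d hd x (by linarith) hx
  set t : ℝ := -x with ht
  have htpos : 0 < t := by simp [ht]; linarith
  have hde : Even (d - 1) := by
    rcases hdo with ⟨k, hk⟩; exact ⟨k, by omega⟩
  have hxt : x = -t := by simp [ht]
  have e1 : x ^ d = -(t ^ d) := by rw [hxt, hdo.neg_pow]
  have e2 : x ^ (d - 1) = t ^ (d - 1) := by rw [hxt, hde.neg_pow]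
  have key : t ^ (d - 1) * (t + 1) = 2 := by
    have htd : t ^ d = t ^ (d - 1) * t := by
      rw [← pow_succ]; congr 1; omega
    rw [e1, e2] at hx
    nlinarith
  have ht1 : t = 1 := by
    by_contra hne
    rcases lt_or_gt_of_ne hne with h | h
    · have hp : t ^ (d - 1) < 1 := pow_lt_one₀ htpos.le h (by omega)
      nlinarith
    · have hp : 1 < t ^ (d - 1) := one_lt_pow₀ h (by omega)
      nlinarith
  rw [hxt, ht1]

lemma aux_real_root (d : ℕ) (hd : 2 ≤ d) (q : ℂ) (him : q.im = 0)
    (hq : q ^ d - q ^ (d - 1) + 2 = 0) :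
    Odd d ∧ q = -1 := by
  have hqre : (q.re : ℂ) = q := by
    rw [← Complex.re_add_im q, him]; simp
  rw [← hqre] at hq
  have hreal : q.re ^ d - q.re ^ (d - 1) + 2 = 0 := by
    exact_mod_cast hq
  rcases Nat.even_or_odd d with he | ho
  · exfalso
    rcases le_or_gt q.re 0 with h | h
    · exact aux_even d hd he q.re h hreal
    · exact aux_nonneg d hd q.re h.le hreal
  · refine ⟨ho, ?_⟩
    have := aux_odd d hd ho q.re hreal
    rw [← hqre, this]; simp

theorem stmt_12 (d : ℕ) (hd : 2 ≤ d) :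
    ∃ q : ℂ, q ^ d - q ^ (d - 1) + 2 = 0 ∧ q.im ≠ 0 := by
  set p : ℂ[X] := X ^ d - X ^ (d - 1) + C 2 with hp
  have heval : ∀ z : ℂ, p.eval z = z ^ d - z ^ (d - 1) + 2 := by
    intro z; simp [hp]
  have hcoeff : p.coeff d = 1 := by
    have h1 : ¬ (d - 1 = d) := by omega
    have h0 : ¬ (d = 0) := by omega
    have h1' : ¬ (d = d - 1) := by omega
    simp [hp, coeff_X_pow, coeff_C, h1, h0, h1']
  have hpne : p ≠ 0 := fun h => by simp [h] at hcoeff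
  have hle : p.natDegree ≤ d := by
    refine le_trans (natDegree_add_le _ _) ?_
    simp only [natDegree_C, max_le_iff]
    constructor
    · refine le_trans (natDegree_sub_le _ _) ?_
      simp [natDegree_X_pow]
    · omega
  have hdeg : p.natDegree = d :=
    le_antisymm hle (le_natDegree_of_ne_zero (by rw [hcoeff]; exact one_ne_zero))
  rcases Nat.even_or_odd d with he | ho
  · -- even case: no real roots at all
    have hdegpos : 0 < p.degree := by
      rw [← natDegree_pos_iff_degree_pos, hdeg]; omega
    obtain ⟨q, hq⟩ := Complex.exists_root hdegpos
    have hq' : q ^ d - q ^ (d - 1) + 2 = 0 := by rw [← heval]; exact hq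
    refine ⟨q, hq', fun him => ?_⟩
    obtain ⟨ho, -⟩ := aux_real_root d hd q him hq'
    exact (Nat.not_odd_iff_even.mpr he) ho
  · -- odd case: factor out (X + 1)
    have hroot1 : p.IsRoot (-1) := by
      have h1 : ((-1 : ℂ)) ^ d = -1 := ho.neg_one_pow
      have hde : Even (d - 1) := by
        rcases ho with ⟨k, hk⟩; exact ⟨k, by omega⟩
      have h2 : ((-1 : ℂ)) ^ (d - 1) = 1 := hde.neg_one_pow
      simp [IsRoot, heval, h1, h2]
      ring
    obtain ⟨Q, hQ⟩ := dvd_iff_isRoot.mpr hroot1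
    have hQne : Q ≠ 0 := by
      intro h; rw [h, mul_zero] at hQ; exact hpne hQ
    have hXC : (X - C (-1) : ℂ[X]) ≠ 0 := X_sub_C_ne_zero _
    have hQdeg : Q.natDegree = d - 1 := by
      have := natDegree_mul hXC hQne
      rw [← hQ, hdeg, natDegree_X_sub_C] at this
      omega
    have hQdegpos : 0 < Q.degree := by
      rw [← natDegree_pos_iff_degree_pos, hQdeg]; omega
    obtain ⟨q, hq⟩ := Complex.exists_root hQdegpos
    have hqp : p.eval q = 0 := by
      rw [hQ]; simp [hq.eq_zero]
    have hq' : q ^ d - q ^ (d - 1) + 2 = 0 := by rw [← heval]; exact hqp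
    refine ⟨q, hq', fun him => ?_⟩
    obtain ⟨-, hqone⟩ := aux_real_root d hd q him hq'
    -- then Q(-1) = 0, so p'(-1) = 0, contradiction
    have hQroot : Q.eval (-1) = 0 := by rw [← hqone]; exact hq.eq_zero
    have hder1 : p.derivative.eval (-1) = 0 := by
      rw [hQ, derivative_mul]
      simp [hQroot]
    have hder2 : p.derivative.eval (-1) = (d : ℂ) + ((d - 1 : ℕ) : ℂ) := by
      have hde : Even (d - 1) := by
        rcases ho with ⟨k, hk⟩; exact ⟨k, by omega⟩
      have hdo2 : Odd (d - 2) := by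
        rcases ho with ⟨k, hk⟩; exact ⟨k - 1, by omega⟩
      have h1 : ((-1 : ℂ)) ^ (d - 1) = 1 := hde.neg_one_pow
      have h2 : ((-1 : ℂ)) ^ (d - 2) = -1 := hdo2.neg_one_pow
      have : (d - 1 - 1 : ℕ) = d - 2 := by omega
      simp [hp, derivative_X_pow, this, h1, h2]
    rw [hder1] at hder2
    have : ((d + (d - 1) : ℕ) : ℂ) = 0 := by push_cast; linear_combination -hder2
    have hne : (d + (d - 1) : ℕ) ≠ 0 := by omega
    exact hne (Nat.cast_eq_zero.mp this)
end

section
/- Let q ∈ ℂ satisfy q^{d−1}(q − 1) = −2 for some integer d ≥ 2 and |q| ≤ 1. Then q = −1 and d is odd. -/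
/-!
Taking norms, `‖q‖ ^ (d - 1) * ‖q - 1‖ = 2` with `‖q‖ ≤ 1` forces `‖q - 1‖ ≥ 2`, while
`‖q - 1‖ ≤ ‖q‖ + 1 ≤ 2`. Equality in the triangle inequality of the strictly convex plane
makes `q` and `-1` point in the same direction with the same length, so `q = -1`; then
`(-1) ^ (d - 1) = 1`, i.e. `d` is odd.
-/

theorem eq_neg_of_two_mul_le_norm_sub {E : Type*} [NormedAddCommGroup E] [NormedSpace ℝ E]
    [StrictConvexSpace ℝ E] {x y : E} {r : ℝ} (hx : ‖x‖ ≤ r) (hy : ‖y‖ ≤ r)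
    (h : 2 * r ≤ ‖x - y‖) : x = -y := by
  have htri : ‖x - y‖ ≤ ‖x‖ + ‖y‖ := norm_sub_le x y
  apply eq_of_norm_eq_of_norm_add_eq
  · rw [norm_neg]; linarith
  · rw [norm_neg, ← sub_eq_add_neg]; linarith

theorem stmt_13 (d : ℕ) (hd : 2 ≤ d) (q : ℂ)
    (h : q ^ (d - 1) * (q - 1) = -2) (habs : ‖q‖ ≤ 1) :
    q = -1 ∧ Odd d := by
  obtain ⟨k, rfl⟩ : ∃ k, d = k + 1 := ⟨d - 1, by omega⟩
  rw [Nat.add_sub_cancel] at h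
  have hnorm : ‖q‖ ^ k * ‖q - 1‖ = 2 := by
    simpa [norm_mul, norm_pow] using congrArg norm h
  have hq : q = -1 := by
    refine eq_neg_of_two_mul_le_norm_sub habs norm_one.le ?_
    calc 2 * 1 = ‖q‖ ^ k * ‖q - 1‖ := by rw [hnorm]; norm_num
      _ ≤ ‖q - 1‖ := mul_le_of_le_one_left (norm_nonneg _) (pow_le_one₀ (norm_nonneg q) habs)
  refine ⟨hq, Even.add_one ?_⟩
  subst hq
  have hpow : (-1 : ℂ) ^ k = 1 := by
    linear_combination (-1 / 2 : ℂ) * h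
  exact (neg_one_pow_eq_one_iff_even (by norm_num)).mp hpow
end

section
/- Let λ > 1, r > 0, and η', η, η̄', η̄ ∈ (1/λ, 1] with η̄' ≥ η', η̄ ≥ η, and η̄' ≤ η. Define P = 1 − ηλ + rλ(η' − η), C = 1 − ηλ + r·η'·λ²(η̄' − η), Q = 1 + r, E = r·η'·λ + 1, F = η(η̄ − η)λ². Then P < 0, C < 0, T := P·C + F·Q·E > 0, and C² + E²·F < η'·λ·T. -/
theorem stmt_16 (lam r η' η ηb' ηb : ℝ) (hlam : 1 < lam) (hr : 0 < r)
    (hη' : η' ∈ Set.Ioc (1 / lam) 1) (hη : η ∈ Set.Ioc (1 / lam) 1)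
    (hηb' : ηb' ∈ Set.Ioc (1 / lam) 1) (hηb : ηb ∈ Set.Ioc (1 / lam) 1)
    (h1 : η' ≤ ηb') (h2 : η ≤ ηb) (h3 : ηb' ≤ η) :
    let P := 1 - η * lam + r * lam * (η' - η)
    let C := 1 - η * lam + r * η' * lam ^ 2 * (ηb' - η)
    let Q := 1 + r
    let E := r * η' * lam + 1
    let F := η * (ηb - η) * lam ^ 2
    P < 0 ∧ C < 0 ∧ 0 < P * C + F * Q * E ∧
      C ^ 2 + E ^ 2 * F < η' * lam * (P * C + F * Q * E) := by
  intro P C Q E F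
  have hlam0 : (0:ℝ) < lam := by linarith
  have hη'l : 1 < η' * lam := by
    have := hη'.1
    rw [div_lt_iff₀ hlam0] at this
    linarith
  have hηl : 1 < η * lam := by
    have := hη.1
    rw [div_lt_iff₀ hlam0] at this
    linarith
  have hη'0 : 0 < η' := by nlinarith
  have hη0 : 0 < η := by nlinarith
  have hη'le : η' ≤ η := le_trans h1 h3
  have hP : P < 0 := by
    show 1 - η * lam + r * lam * (η' - η) < 0
    nlinarith [mul_nonneg (mul_nonneg hr.le hlam0.le) (sub_nonneg.mpr hη'le)]
  have hC : C < 0 := by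
    show 1 - η * lam + r * η' * lam ^ 2 * (ηb' - η) < 0
    nlinarith [sq_nonneg lam, mul_nonneg (mul_nonneg hr.le hη'0.le) (mul_nonneg (sq_nonneg lam) (sub_nonneg.mpr h3))]
  have hF : 0 ≤ F := by
    show 0 ≤ η * (ηb - η) * lam ^ 2
    have : 0 ≤ ηb - η := by linarith
    positivity
  have hE : 0 < E := by
    show 0 < r * η' * lam + 1
    nlinarith
  have hQ : 0 < Q := by show 0 < 1 + r; linarith
  have hT : 0 < P * C + F * Q * E := by
    have : 0 < P * C := mul_pos_of_neg_of_neg hP hC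
    nlinarith [mul_nonneg hF (mul_pos hQ hE).le]
  refine ⟨hP, hC, hT, ?_⟩
  have hCP : η' * lam * P < C := by
    show η' * lam * (1 - η * lam + r * lam * (η' - η)) < 1 - η * lam + r * η' * lam ^ 2 * (ηb' - η)
    nlinarith [mul_pos (sub_pos.mpr hηl) (sub_pos.mpr hη'l),
      mul_nonneg (mul_nonneg (mul_nonneg hr.le hη'0.le) (sq_nonneg lam)) (sub_nonneg.mpr h1)]
  have hEQ : E < η' * lam * Q := by
    show r * η' * lam + 1 < η' * lam * (1 + r)
    nlinarith
  have h4 : C ^ 2 < η' * lam * (P * C) := by nlinarith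
  have h5 : E ^ 2 * F ≤ η' * lam * (F * Q * E) := by nlinarith [mul_nonneg hF hE.le]
  nlinarith
end

section
/- Let λ > 1, r > 0, and η', η, η̄', η̄ ∈ (1/λ, 1] with η̄' ≥ η', η̄ ≥ η, and η̄' ≤ η. With P = 1 − ηλ + rλ(η' − η), C = 1 − ηλ + r·η'λ²(η̄' − η), Q = 1 + r, E = r·η'λ + 1, F = η(η̄ − η)λ², G = η'λ − 1, H = η'λ(η̄'λ − 1), the function h(τ) = ((P + τC)² + (Q + τE)²·F) / (G + τH)² is strictly decreasing on [0, ∞). -/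
/-!
Write `N τ = (P + τC)² + (Q + τE)²F` and `D τ = G + τH`. The numerator of `(N / D²)'` is a
multiple of `S τ = (N'/2) D - N H`, which is affine in `τ` because the `τ²` terms cancel, so
the function decreases once `S` has nonpositive slope and negative intercept; without
differentiating, `N s D(t)² - N t D(s)²` is `t - s` times a nonnegative combination of minus
these two. The slope is `C (P H - C G) + E F (E G - Q H)`, nonpositive by a sign count on the
RBB coefficients, and the intercept then follows from
`-H · intercept = -G · slope + (H P - G C)² + F (H Q - G E)²`,
which is the Cauchy–Schwarz step of the paper.
-/

open Set

section RationalQuadratic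

variable {P C Q E F G H : ℝ}

theorem strictAntiOn_quadratic_div_sq_of_slope_nonpos_of_intercept_neg (hG : 0 < G) (hH : 0 ≤ H)
    (hslope : (C ^ 2 + E ^ 2 * F) * G - (P * C + Q * E * F) * H ≤ 0)
    (hintercept : (P * C + Q * E * F) * G - (P ^ 2 + Q ^ 2 * F) * H < 0) :
    StrictAntiOn (fun τ : ℝ => ((P + τ * C) ^ 2 + (Q + τ * E) ^ 2 * F) / (G + τ * H) ^ 2)
      (Ici 0) := by
  intro s (hs : 0 ≤ s) t (ht : 0 ≤ t) hst
  set S₁ := (C ^ 2 + E ^ 2 * F) * G - (P * C + Q * E * F) * H with hS₁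
  set S₀ := (P * C + Q * E * F) * G - (P ^ 2 + Q ^ 2 * F) * H with hS₀
  have key : ((P + s * C) ^ 2 + (Q + s * E) ^ 2 * F) * (G + t * H) ^ 2
      - ((P + t * C) ^ 2 + (Q + t * E) ^ 2 * F) * (G + s * H) ^ 2
      = (t - s) * ((2 * G + (s + t) * H) * -S₀ + ((s + t) * G + 2 * (s * t) * H) * -S₁) := by
    rw [hS₀, hS₁]; ring
  have hDs : 0 < G + s * H := by positivity
  have hDt : 0 < G + t * H := by positivity
  rw [div_lt_div_iff₀ (by positivity) (by positivity), ← sub_pos, key]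
  exact mul_pos (sub_pos.2 hst) (add_pos_of_pos_of_nonneg
    (mul_pos (by positivity) (neg_pos.2 hintercept))
    (mul_nonneg (by positivity) (neg_nonneg.2 hslope)))

theorem intercept_neg_of_slope_nonpos (hF : 0 ≤ F) (hG : 0 ≤ G) (hH : 0 < H)
    (hslope : (C ^ 2 + E ^ 2 * F) * G - (P * C + Q * E * F) * H ≤ 0) (hPC : P * H ≠ C * G) :
    (P * C + Q * E * F) * G - (P ^ 2 + Q ^ 2 * F) * H < 0 := by
  have key : ((P * C + Q * E * F) * G - (P ^ 2 + Q ^ 2 * F) * H) * H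
      = ((C ^ 2 + E ^ 2 * F) * G - (P * C + Q * E * F) * H) * G
        - ((P * H - C * G) ^ 2 + F * (Q * H - E * G) ^ 2) := by
    ring
  have hsq : 0 < (P * H - C * G) ^ 2 := by have := sub_ne_zero.2 hPC; positivity
  have : 0 ≤ F * (Q * H - E * G) ^ 2 := by positivity
  have : ((C ^ 2 + E ^ 2 * F) * G - (P * C + Q * E * F) * H) * G ≤ 0 :=
    mul_nonpos_of_nonpos_of_nonneg hslope hG
  exact neg_of_mul_neg_left (by linarith) hH.le

theorem slope_nonpos_of_signs (hC : C ≤ 0) (hE : 0 ≤ E) (hF : 0 ≤ F)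
    (hPC : P * H ≤ C * G) (hQE : E * G ≤ Q * H) :
    (C ^ 2 + E ^ 2 * F) * G - (P * C + Q * E * F) * H ≤ 0 := by
  have key : (C ^ 2 + E ^ 2 * F) * G - (P * C + Q * E * F) * H
      = C * (C * G - P * H) + E * F * (E * G - Q * H) := by
    ring
  rw [key]
  have : C * (C * G - P * H) ≤ 0 := mul_nonpos_of_nonpos_of_nonneg hC (by linarith)
  have : E * F * (E * G - Q * H) ≤ 0 :=
    mul_nonpos_of_nonneg_of_nonpos (mul_nonneg hE hF) (by linarith)
  linarith

end RationalQuadratic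

section RBBCoefficients

variable {lam r η' η ηb' : ℝ}

theorem rbb_P_mul_H_lt_C_mul_G (hlam : 0 < lam) (hr : 0 ≤ r) (hg : 1 < η' * lam)
    (h1 : η' ≤ ηb') (h3 : ηb' ≤ η) :
    (1 - η * lam + r * lam * (η' - η)) * (η' * lam * (ηb' * lam - 1))
      < (1 - η * lam + r * η' * lam ^ 2 * (ηb' - η)) * (η' * lam - 1) := by
  have hη : η' * lam ≤ η * lam := by gcongr; linarith
  have hH : η' * lam * (η' * lam - 1) ≤ η' * lam * (ηb' * lam - 1) := by gcongr
  have hP : 0 ≤ η * lam - 1 + r * lam * (η - η') := by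
    have : 0 ≤ r * lam * (η - η') := by have := sub_nonneg.2 (h1.trans h3); positivity
    linarith
  have hrl : 0 ≤ r * lam * (η' * lam) * (η' * lam - 1) := by
    have : 0 ≤ η' * lam - 1 := by linarith
    positivity
  -- the two sides differ by at least `(η'λ - 1)² (ηλ - 1)`
  have hgap : 0 < (η' * lam - 1) ^ 2 * (η * lam - 1) := by
    have : 0 < η * lam - 1 := by linarith
    have : 0 < η' * lam - 1 := by linarith
    positivity
  nlinarith [mul_le_mul_of_nonneg_left hH hP, mul_le_mul_of_nonneg_left h1 hrl]

theorem rbb_E_mul_G_le_Q_mul_H (hlam : 0 < lam) (hr : 0 ≤ r) (hg : 1 < η' * lam)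
    (h1 : η' ≤ ηb') :
    (r * η' * lam + 1) * (η' * lam - 1) ≤ (1 + r) * (η' * lam * (ηb' * lam - 1)) := by
  have hH : η' * lam * (η' * lam - 1) ≤ η' * lam * (ηb' * lam - 1) := by gcongr
  nlinarith

end RBBCoefficients

theorem stmt_17_general (lam r η' η ηb' ηb : ℝ) (hlam : 1 < lam) (hr : 0 < r)
    (hη' : η' ∈ Set.Ioc (1 / lam) 1)
    (h1 : η' ≤ ηb') (h2 : η ≤ ηb) (h3 : ηb' ≤ η) :
    StrictAntiOn
      (fun τ : ℝ =>
        (((1 - η * lam + r * lam * (η' - η)) + τ * (1 - η * lam + r * η' * lam ^ 2 * (ηb' - η))) ^ 2 +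
            ((1 + r) + τ * (r * η' * lam + 1)) ^ 2 * (η * (ηb - η) * lam ^ 2)) /
          ((η' * lam - 1) + τ * (η' * lam * (ηb' * lam - 1))) ^ 2)
      (Set.Ici (0 : ℝ)) := by
  have hlam0 : 0 < lam := by linarith
  have hg : 1 < η' * lam := by
    have := hη'.1
    rwa [div_lt_iff₀ hlam0] at this
  have hη'0 : 0 < η' := lt_trans (by positivity) hη'.1
  have hηlam : 1 < η * lam := hg.trans_le (by gcongr; linarith)
  have hG : 0 < η' * lam - 1 := by linarith
  have hH : 0 < η' * lam * (ηb' * lam - 1) :=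
    mul_pos (by linarith) (by nlinarith)
  have hF : 0 ≤ η * (ηb - η) * lam ^ 2 :=
    mul_nonneg (mul_nonneg (by nlinarith) (by linarith)) (sq_nonneg lam)
  have hC : 1 - η * lam + r * η' * lam ^ 2 * (ηb' - η) ≤ 0 := by
    have : r * η' * lam ^ 2 * (ηb' - η) ≤ 0 :=
      mul_nonpos_of_nonneg_of_nonpos (by positivity) (by linarith)
    linarith
  have hPC := rbb_P_mul_H_lt_C_mul_G hlam0 hr.le hg h1 h3
  have hslope := slope_nonpos_of_signs hC (by positivity) hF hPC.le
    (rbb_E_mul_G_le_Q_mul_H hlam0 hr.le hg h1)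
  exact strictAntiOn_quadratic_div_sq_of_slope_nonpos_of_intercept_neg hG hH.le hslope
    (intercept_neg_of_slope_nonpos hF hG.le hH hslope hPC.ne)

theorem stmt_17 (lam r η' η ηb' ηb : ℝ) (hlam : 1 < lam) (hr : 0 < r)
    (hη' : η' ∈ Set.Ioc (1 / lam) 1) (hη : η ∈ Set.Ioc (1 / lam) 1)
    (hηb' : ηb' ∈ Set.Ioc (1 / lam) 1) (hηb : ηb ∈ Set.Ioc (1 / lam) 1)
    (h1 : η' ≤ ηb') (h2 : η ≤ ηb) (h3 : ηb' ≤ η) :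
    StrictAntiOn
      (fun τ : ℝ =>
        (((1 - η * lam + r * lam * (η' - η)) + τ * (1 - η * lam + r * η' * lam ^ 2 * (ηb' - η))) ^ 2 +
            ((1 + r) + τ * (r * η' * lam + 1)) ^ 2 * (η * (ηb - η) * lam ^ 2)) /
          ((η' * lam - 1) + τ * (η' * lam * (ηb' * lam - 1))) ^ 2)
      (Set.Ici (0 : ℝ)) :=
  stmt_17_general lam r η' η ηb' ηb hlam hr hη' h1 h2 h3
end

section
/- Let θ ∈ ℝ and (m̂_k)_{k≥0} an absolutely summable real sequence. Define u_k^{(p)} = ∑_{j=0}^{k−1} m̂_j · sin((k − j − 1)θ) and S = ∑_{k=0}^{∞} m̂_k e^{−i(k+1)θ}. Then u_k^{(p)} − |S|·sin(kθ + Arg(S)) → 0 as k → ∞. -/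
/-!
Put `a j = m j e^{-i(j+1)θ}` and `S = ∑ a j`. Then `u_k = Im (e^{ikθ} ∑_{j<k} a j)` and
`|S| sin (kθ + arg S) = Im (e^{ikθ} S)`, so the difference is bounded by the tail
`‖∑_{j<k} a j - S‖` of an absolutely convergent series.
-/

open Complex Filter Topology

lemma Complex.im_exp_ofReal_mul_I_mul (x : ℝ) (z : ℂ) :
    (exp (x * I) * z).im = ‖z‖ * Real.sin (x + arg z) := by
  conv_lhs => rw [← norm_mul_exp_arg_mul_I z]
  rw [mul_left_comm, ← exp_add, ← add_mul, ← ofReal_add, im_ofReal_mul, exp_ofReal_mul_I_im]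

lemma summable_ofReal_mul_exp_ofReal_mul_I {m : ℕ → ℝ} (hm : Summable fun k => |m k|)
    (φ : ℕ → ℝ) : Summable fun k => (m k : ℂ) * exp (φ k * I) :=
  .of_norm <| by simpa [norm_exp_ofReal_mul_I] using hm

lemma tendsto_im_exp_ofReal_mul_I_mul_sum_range_sub_tsum {a : ℕ → ℂ} (ha : Summable a) (x : ℕ → ℝ) :
    Tendsto (fun k => (exp (x k * I) * (∑ j ∈ Finset.range k, a j - ∑' j, a j)).im)
      atTop (𝓝 0) := by
  have htail : Tendsto (fun k => ‖∑ j ∈ Finset.range k, a j - ∑' j, a j‖) atTop (𝓝 0) := by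
    simpa using (ha.hasSum.tendsto_sum_nat.sub_const (∑' j, a j)).norm
  refine squeeze_zero_norm (fun k => ?_) htail
  calc ‖(exp (x k * I) * (∑ j ∈ Finset.range k, a j - ∑' j, a j)).im‖
      ≤ ‖exp (x k * I) * (∑ j ∈ Finset.range k, a j - ∑' j, a j)‖ := abs_im_le_norm _
    _ = ‖∑ j ∈ Finset.range k, a j - ∑' j, a j‖ := by rw [norm_mul, norm_exp_ofReal_mul_I, one_mul]

lemma sum_range_mul_sin_eq_im (θ : ℝ) (m : ℕ → ℝ) (k : ℕ) :
    ∑ j ∈ Finset.range k, m j * Real.sin (((k : ℝ) - j - 1) * θ) =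
      (exp (((k * θ : ℝ) : ℂ) * I) *
        ∑ j ∈ Finset.range k, (m j : ℂ) * exp (-(((j : ℝ) + 1) * θ) * I)).im := by
  rw [Finset.mul_sum, im_sum]
  refine Finset.sum_congr rfl fun j _ => ?_
  have hphase : ((k * θ : ℝ) : ℂ) * I + -(((j : ℝ) + 1) * θ) * I =
      ((((k : ℝ) - j - 1) * θ : ℝ) : ℂ) * I := by
    push_cast
    ring
  rw [mul_left_comm, ← exp_add, hphase, im_ofReal_mul, exp_ofReal_mul_I_im]

open Complex in
theorem stmt_18 (θ : ℝ) (m : ℕ → ℝ) (hm : Summable fun k => |m k|) :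
    Filter.Tendsto
      (fun k : ℕ =>
        (∑ j ∈ Finset.range k, m j * Real.sin (((k : ℝ) - j - 1) * θ)) -
          ‖∑' k : ℕ, (m k : ℂ) * Complex.exp (-(((k : ℝ) + 1) * θ) * Complex.I)‖ *
            Real.sin ((k : ℝ) * θ +
              Complex.arg
                (∑' k : ℕ, (m k : ℂ) * Complex.exp (-(((k : ℝ) + 1) * θ) * Complex.I))))
      Filter.atTop (nhds 0) := by
  have ha : Summable fun k : ℕ => (m k : ℂ) * exp (-(((k : ℝ) + 1) * θ) * I) := by
    simpa using summable_ofReal_mul_exp_ofReal_mul_I hm fun k => -(((k : ℝ) + 1) * θ)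
  refine (tendsto_im_exp_ofReal_mul_I_mul_sum_range_sub_tsum ha fun k => k * θ).congr fun k => ?_
  rw [sum_range_mul_sin_eq_im, ← im_exp_ofReal_mul_I_mul, mul_sub, sub_im]
end
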